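/- arXiv:1802.03031 — 2 statements merged into one kernel-verified Lean document; each statement's English description precedes it below -/
import Mathlib

section
/- For each λ ∈ (0,1), the function δ_{M,λ}(x,y) = sup{t ∈ ℝ : M(x,y,t) < λ} is a metric on X. -/
open Filter Set Topology

structure IsFuzzyMetric {X : Type*} (M : X → X → ℝ → ℝ) : Prop where
  mem_Icc : ∀ x y t, M x y t ∈ Set.Icc (0:ℝ) 1
  km1 : ∀ x y : X, ∀ t : ℝ, t ≤ 0 → M x y t = 0
  km2 : ∀ x y : X, (∀ t : ℝ, 0 < t → M x y t = 1) ↔ x = y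
  km3 : ∀ x y t, M x y t = M y x t
  km4 : ∀ x y z : X, ∀ t s : ℝ, min (M x y t) (M y z s) ≤ M x z (t + s)
  km5_left_cont : ∀ x y : X, x ≠ y → ∀ t : ℝ,
    Filter.Tendsto (M x y) (nhdsWithin t (Set.Iio t)) (nhds (M x y t))
  km5_lim : ∀ x y : X, x ≠ y → Filter.Tendsto (M x y) Filter.atTop (nhds 1)
  sdp : ∀ x y : X, x ≠ y →
    Filter.Tendsto (M x y) (nhdsWithin 0 (Set.Ioi 0)) (nhds 0)

noncomputable def Delta {X : Type*} (M : X → X → ℝ → ℝ) (lam : ℝ) (x y : X) : ℝ :=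
  sInf {t : ℝ | lam < M x y t}

noncomputable def delta {X : Type*} (M : X → X → ℝ → ℝ) (lam : ℝ) (x y : X) : ℝ :=
  sSup {t : ℝ | M x y t < lam}


/-! Every `t` beyond `δ(x,y)` has `λ ≤ M x y t`, so by (KM4) thresholds for `(x,y)` and `(y,z)`
add up to one for `(x,z)`: this is the triangle inequality. (KM5) makes `δ` finite, and (SDP)
makes `M x y t < λ` for small `t > 0`, so `δ(x,y) > 0` when `x ≠ y`. -/

namespace IsFuzzyMetric

variable {X : Type*} {M : X → X → ℝ → ℝ} (hM : IsFuzzyMetric M) {lam : ℝ}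
include hM

theorem apply_self {t : ℝ} (x : X) (ht : 0 < t) : M x x t = 1 :=
  (hM.km2 x x).mpr rfl t ht

theorem setOf_apply_self_lt_eq_Iic (hlam₀ : 0 < lam) (hlam₁ : lam ≤ 1) (x : X) :
    {t : ℝ | M x x t < lam} = Iic 0 := by
  ext t
  simp only [mem_ofPred_eq, mem_Iic]
  constructor
  · intro ht
    by_contra! hpos
    rw [hM.apply_self x hpos] at ht
    linarith
  · intro ht
    rwa [hM.km1 x x t ht]

theorem eventually_lt_atTop (hlam : lam < 1) (x y : X) : ∀ᶠ t in atTop, lam < M x y t := by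
  by_cases hxy : x = y
  · subst hxy
    filter_upwards [eventually_gt_atTop 0] with t ht
    rwa [hM.apply_self x ht]
  · exact (hM.km5_lim x y hxy).eventually (lt_mem_nhds hlam)

theorem bddAbove_setOf_lt (hlam : lam < 1) (x y : X) : BddAbove {t : ℝ | M x y t < lam} := by
  obtain ⟨T, hT⟩ := (hM.eventually_lt_atTop hlam x y).exists_forall_of_atTop
  exact ⟨T, fun t ht => le_of_not_ge fun hTt => (hT t hTt).not_gt ht⟩

theorem le_delta (hlam : lam < 1) {x y : X} {t : ℝ} (ht : M x y t < lam) : t ≤ delta M lam x y :=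
  le_csSup (hM.bddAbove_setOf_lt hlam x y) ht

theorem le_apply_of_delta_lt (hlam : lam < 1) {x y : X} {t : ℝ} (ht : delta M lam x y < t) :
    lam ≤ M x y t :=
  le_of_not_gt fun h => (hM.le_delta hlam h).not_gt ht

theorem zero_mem_setOf_lt (hlam : 0 < lam) (x y : X) : (0 : ℝ) ∈ {t : ℝ | M x y t < lam} :=
  show M x y 0 < lam from (hM.km1 x y 0 le_rfl).symm ▸ hlam

theorem delta_nonneg (hlam : 0 < lam) (x y : X) : 0 ≤ delta M lam x y :=
  Real.sSup_nonneg' ⟨0, hM.zero_mem_setOf_lt hlam x y, le_rfl⟩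

theorem delta_self (hlam₀ : 0 < lam) (hlam₁ : lam ≤ 1) (x : X) : delta M lam x x = 0 := by
  rw [delta, hM.setOf_apply_self_lt_eq_Iic hlam₀ hlam₁, csSup_Iic]

theorem delta_pos (hlam₀ : 0 < lam) (hlam₁ : lam < 1) {x y : X} (hxy : x ≠ y) :
    0 < delta M lam x y := by
  have hsmall : ∀ᶠ t in 𝓝[>] 0, M x y t < lam :=
    (hM.sdp x y hxy).eventually (gt_mem_nhds hlam₀)
  obtain ⟨t, ht, htpos⟩ := (hsmall.and self_mem_nhdsWithin).exists
  exact htpos.trans_le (hM.le_delta hlam₁ ht)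

theorem delta_eq_zero_iff (hlam₀ : 0 < lam) (hlam₁ : lam < 1) {x y : X} :
    delta M lam x y = 0 ↔ x = y :=
  ⟨fun h => by_contra fun hxy => (hM.delta_pos hlam₀ hlam₁ hxy).ne' h,
    fun h => h ▸ hM.delta_self hlam₀ hlam₁.le x⟩

theorem delta_comm (x y : X) : delta M lam x y = delta M lam y x := by
  simp only [delta, hM.km3 x y]

theorem delta_triangle (hlam₀ : 0 < lam) (hlam₁ : lam < 1) (x y z : X) :
    delta M lam x z ≤ delta M lam x y + delta M lam y z := by
  refine csSup_le ⟨0, hM.zero_mem_setOf_lt hlam₀ x z⟩ ?_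
  intro u hu
  by_contra! hgap
  -- write `u = t + s` with `t > δ(x,y)` and `s > δ(y,z)`; then (KM4) forces `λ ≤ M x z u`
  set ε := (u - (delta M lam x y + delta M lam y z)) / 2
  have hε : 0 < ε := half_pos (sub_pos.mpr hgap)
  have hxy := hM.le_apply_of_delta_lt hlam₁ (x := x) (y := y) (lt_add_of_pos_right _ hε)
  have hyz := hM.le_apply_of_delta_lt hlam₁ (x := y) (y := z) (lt_add_of_pos_right _ hε)
  have hxz := (le_min hxy hyz).trans (hM.km4 x y z _ _)
  rw [show delta M lam x y + ε + (delta M lam y z + ε) = u by ring] at hxz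
  exact hxz.not_gt hu

end IsFuzzyMetric

theorem delta_isMetric {X : Type*} (M : X → X → ℝ → ℝ) (hM : IsFuzzyMetric M)
    (lam : ℝ) (hlam : lam ∈ Set.Ioo (0:ℝ) 1) :
    (∀ x y : X, 0 ≤ delta M lam x y) ∧
    (∀ x y : X, delta M lam x y = 0 ↔ x = y) ∧
    (∀ x y : X, delta M lam x y = delta M lam y x) ∧
    (∀ x y z : X, delta M lam x z ≤ delta M lam x y + delta M lam y z) :=
  ⟨hM.delta_nonneg hlam.1, fun _ _ => hM.delta_eq_zero_iff hlam.1 hlam.2, hM.delta_comm,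
    hM.delta_triangle hlam.1 hlam.2⟩
end

section
/- Let M be a fuzzy metric on X. If for all x,y the limit of δ_{M,λ}(x,y) as λ → 1⁻ exists (is finite), then for all x,y the limit of Δ_{M,λ}(x,y) as λ → 1⁻ exists (is finite). -/
open Filter Set Topology

/-!
For `0 ≤ λ₁ < λ₂ < 1` every `t > δ_{λ₂}(x, y)` has `M x y t ≥ λ₂ > λ₁`, so `Δ_{λ₁}(x, y) ≤ δ_{λ₂}(x, y)`.
Hence `λ ↦ Δ_λ(x, y)` is monotone on `[0, 1)` and bounded by the limit of `δ_λ(x, y)` at `1⁻`,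
so it has a left limit at `1` as well.
-/

namespace IsFuzzyMetric

variable {X : Type*} {M : X → X → ℝ → ℝ} (hM : IsFuzzyMetric M)
include hM

theorem monotone (x y : X) : Monotone (M x y) := by
  intro t s hts
  rcases hts.eq_or_lt with rfl | hlt
  · exact le_rfl
  have hyy : M y y (s - t) = 1 := (hM.km2 y y).2 rfl _ (sub_pos.2 hlt)
  calc M x y t = min (M x y t) (M y y (s - t)) := by rw [hyy, min_eq_left (hM.mem_Icc x y t).2]
    _ ≤ M x y (t + (s - t)) := hM.km4 x y y t (s - t)
    _ = M x y s := by rw [add_sub_cancel]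

theorem exists_lt_apply (x y : X) {lam : ℝ} (hlam : lam < 1) : ∃ t, lam < M x y t := by
  rcases eq_or_ne x y with rfl | hne
  · exact ⟨1, by rwa [(hM.km2 x x).2 rfl 1 one_pos]⟩
  · exact ((hM.km5_lim x y hne).eventually (eventually_gt_nhds hlam)).exists

theorem bddBelow_setOf_lt_apply (x y : X) {lam : ℝ} (hlam : 0 ≤ lam) :
    BddBelow {t : ℝ | lam < M x y t} := by
  refine ⟨0, fun t (ht : lam < M x y t) => le_of_not_ge fun htle => ?_⟩
  rw [hM.km1 x y t htle] at ht
  exact ht.not_ge hlam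

theorem bddAbove_setOf_apply_lt (x y : X) {lam : ℝ} (hlam : lam < 1) :
    BddAbove {t : ℝ | M x y t < lam} := by
  obtain ⟨T, hT⟩ := hM.exists_lt_apply x y hlam
  exact ⟨T, fun t ht => le_of_not_ge fun hTt => (hT.trans_le (hM.monotone x y hTt)).not_gt ht⟩

theorem Delta_le_delta (x y : X) {l₁ l₂ : ℝ} (h₀ : 0 ≤ l₁) (h₁₂ : l₁ < l₂) (h₂ : l₂ < 1) :
    Delta M l₁ x y ≤ delta M l₂ x y := by
  refine le_of_forall_gt_imp_ge_of_dense fun t ht => csInf_le (hM.bddBelow_setOf_lt_apply x y h₀) ?_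
  have hle : l₂ ≤ M x y t :=
    le_of_not_gt fun hlt => ht.not_ge (le_csSup (hM.bddAbove_setOf_apply_lt x y h₂) hlt)
  exact h₁₂.trans_le hle

theorem monotoneOn_Delta (x y : X) : MonotoneOn (fun lam => Delta M lam x y) (Ico 0 1) :=
  fun _ ha _ hb hab => csInf_le_csInf (hM.bddBelow_setOf_lt_apply x y ha.1)
    (hM.exists_lt_apply x y hb.2) fun _ ht => hab.trans_lt ht

theorem Delta_le_of_tendsto_delta {x y : X} {L : ℝ}
    (hL : Tendsto (fun lam => delta M lam x y) (𝓝[<] 1) (𝓝 L)) {lam : ℝ} (hlam : lam ∈ Ico 0 1) :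
    Delta M lam x y ≤ L :=
  ge_of_tendsto hL <| by
    filter_upwards [Ioo_mem_nhdsLT hlam.2] with l hl using
      hM.Delta_le_delta x y hlam.1 hl.1 hl.2

end IsFuzzyMetric

theorem delta_limit_implies_Delta_limit {X : Type*} (M : X → X → ℝ → ℝ)
    (hM : IsFuzzyMetric M)
    (h : ∀ x y : X, ∃ L : ℝ,
      Filter.Tendsto (fun lam => delta M lam x y)
        (nhdsWithin (1:ℝ) (Set.Iio 1)) (nhds L)) :
    ∀ x y : X, ∃ L : ℝ,
      Filter.Tendsto (fun lam => Delta M lam x y)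
        (nhdsWithin (1:ℝ) (Set.Iio 1)) (nhds L) := by
  intro x y
  obtain ⟨L, hL⟩ := h x y
  have hbdd : BddAbove ((fun lam => Delta M lam x y) '' Ioo 0 1) :=
    ⟨L, forall_mem_image.2 fun _ hlam => hM.Delta_le_of_tendsto_delta hL (Ioo_subset_Ico_self hlam)⟩
  exact ⟨_, MonotoneOn.tendsto_nhdsWithin_Ioo_left (nonempty_Ioo.2 one_pos)
    ((hM.monotoneOn_Delta x y).mono Ioo_subset_Ico_self) hbdd⟩
end
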